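/- Fix a real number p < 0. Define Ei(x) = ∫_{x}^{∞} e^{−v}/v dv for x > 0, and for integers 1 ≤ b ≤ k let H(b,k) = Σ_{j=b+1}^{k} 1/j (with H(k,k) = 0) and c_{b,k,p} = (1/p)·( ((k+1)/b)^{p}/(1−p) − 1 ) / (1 + H(b,k)). Then lim_{k→∞} (1/k)·Σ_{b=1}^{k} c_{b,k,p} = e^{1−p}·Ei(1−p)/(p(1−p)) − (e/p)·Ei(1). -/

import Mathlib

/-
With `b = ⌈x k⌉`, the average `(1/k) ∑_b c_{b,k,p}` is the integral over `(0,1]` of the step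
function `x ↦ c_{⌈xk⌉,k,p}`. Comparing `H(b,k)` with `∫ dt/t` gives `H(⌈xk⌉,k) → -log x`, and
`(k+1)/⌈xk⌉ → 1/x`, so the step functions converge pointwise to
`(1/p) (x^{-p}/(1-p) - 1) / (1 - log x)`; they are bounded by `-1/p`, so by dominated convergence
the limit is the integral of this function, which the substitution `x = e^{1-v}` turns into
`e^{1-p} Ei(1-p)/(p(1-p)) - (e/p) Ei(1)`.
-/

open Finset Filter Real

/-- The exponential integral `Ei(x) = ∫_{x}^{∞} e^{−v}/v dv` (for `x > 0`). -/
noncomputable def Ei (x : ℝ) : ℝ := ∫ v in Set.Ioi x, Real.exp (-v) / v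

/-- The tail harmonic sum `H(b,k) = ∑_{j=b+1}^{k} 1/j`, with `H(k,k) = 0`. -/
noncomputable def Htail (b k : ℕ) : ℝ := ∑ j ∈ Finset.Icc (b + 1) k, (1 : ℝ) / (j : ℝ)

/-- The asymptotic bias coefficient of the lower-trimmed Hill statistic `T_{b,k}`:
`c_{b,k,p} = (1/p)·( ((k+1)/b)^p/(1−p) − 1 )/(1 + H(b,k))`. -/
noncomputable def cCoeff (b k : ℕ) (p : ℝ) : ℝ :=
  (1 / p) * ((((k : ℝ) + 1) / (b : ℝ)) ^ p / (1 - p) - 1) / (1 + Htail b k)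

open MeasureTheory Topology

lemma Htail_nonneg (b k : ℕ) : 0 ≤ Htail b k :=
  sum_nonneg fun _ _ => by positivity

lemma Htail_eq_sum_Ico (b k : ℕ) : Htail b k = ∑ j ∈ Ico (b + 1) (k + 1), (j : ℝ)⁻¹ := by
  simp only [Htail, one_div, Ico_add_one_right_eq_Icc]

lemma log_div_le_Htail {b k : ℕ} (hbk : b ≤ k) :
    log ((k + 1) / (b + 1)) ≤ Htail b k := by
  have := (inv_antitoneOn_Icc_right (b := ((k + 1 : ℕ) : ℝ))
    (Nat.cast_pos.2 b.succ_pos)).integral_le_sum_Ico (by omega : b + 1 ≤ k + 1)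
  rw [integral_inv_of_pos (by positivity) (by positivity)] at this
  rw [Htail_eq_sum_Ico]
  exact_mod_cast this

lemma Htail_le_log_div {b k : ℕ} (hb : 0 < b) (hbk : b ≤ k) :
    Htail b k ≤ log (k / b) := by
  have hb' : (0 : ℝ) < b := Nat.cast_pos.2 hb
  have := (inv_antitoneOn_Icc_right (b := (k : ℝ)) hb').sum_le_integral_Ico hbk
  rw [integral_inv_of_pos hb' (hb'.trans_le (Nat.cast_le.2 hbk))] at this
  rw [Htail_eq_sum_Ico, ← sum_Ico_add' (fun j : ℕ => (j : ℝ)⁻¹)]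
  exact_mod_cast this

section StepFunction

variable {E : Type*} [NormedAddCommGroup E] [NormedSpace ℝ E] [CompleteSpace E]

lemma natCeil_mul_eq_of_mem_uIoc {k i : ℕ} (hk : 0 < k) {x : ℝ}
    (hx : x ∈ Set.uIoc ((i : ℝ) / k) ((i + 1 : ℕ) / k)) : ⌈x * k⌉₊ = i + 1 := by
  have hk' : (0 : ℝ) < k := by exact_mod_cast hk
  rw [Set.uIoc_of_le (by gcongr; simp)] at hx
  rw [Nat.ceil_eq_iff (Nat.succ_ne_zero i), Nat.succ_sub_one, ← div_lt_iff₀ hk',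
    ← le_div_iff₀ hk']
  exact hx

lemma natCeil_mul_mem_Icc {k : ℕ} (hk : 0 < k) {x : ℝ} (hx : x ∈ Set.Ioc 0 1) :
    ⌈x * k⌉₊ ∈ Icc 1 k := by
  have hk' : (0 : ℝ) < k := by exact_mod_cast hk
  exact mem_Icc.2 ⟨Nat.one_le_iff_ne_zero.2 (Nat.ceil_pos.2 (by
    nlinarith [hx.1])).ne', Nat.ceil_le.2 (by nlinarith [hx.2])⟩

lemma integral_Ioc_comp_natCeil_mul (f : ℕ → E) {k : ℕ} (hk : 0 < k) :
    ∫ x in Set.Ioc (0 : ℝ) 1, f ⌈x * k⌉₊ = (1 / (k : ℝ)) • ∑ b ∈ Icc 1 k, f b := by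
  have hstep : ∀ i : ℕ, Set.EqOn (fun x : ℝ => f ⌈x * k⌉₊) (fun _ => f (i + 1))
      (Set.uIoc ((i : ℝ) / k) ((i + 1 : ℕ) / k)) := fun i x hx => by
    simp only [natCeil_mul_eq_of_mem_uIoc hk hx]
  have hint : ∀ i < k, IntervalIntegrable (fun x : ℝ => f ⌈x * k⌉₊) volume
      ((i : ℝ) / k) ((i + 1 : ℕ) / k) := fun i _ =>
    (intervalIntegrable_congr (hstep i)).2 intervalIntegrable_const
  have hsum := intervalIntegral.sum_integral_adjacent_intervals hint
  rw [Nat.cast_zero, zero_div, div_self (Nat.cast_ne_zero.2 hk.ne')] at hsum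
  rw [← intervalIntegral.integral_of_le zero_le_one, ← hsum, smul_sum,
    ← Ico_add_one_right_eq_Icc, sum_Ico_eq_sum_range, Nat.add_sub_cancel]
  refine sum_congr rfl fun i _ => ?_
  rw [add_comm 1 i, intervalIntegral.integral_congr_ae (ae_of_all _ (hstep i)),
    intervalIntegral.integral_const]
  congr 1
  push_cast
  ring

theorem tendsto_average_of_tendsto_natCeil_mul {c : ℕ → ℕ → E} {g : ℝ → E} {C : ℝ}
    (hbound : ∀ k, ∀ b ∈ Icc 1 k, ‖c b k‖ ≤ C)
    (hlim : ∀ x ∈ Set.Ioc (0 : ℝ) 1, Tendsto (fun k : ℕ => c ⌈x * k⌉₊ k) atTop (𝓝 (g x))) :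
    Tendsto (fun k : ℕ => (1 / (k : ℝ)) • ∑ b ∈ Icc 1 k, c b k) atTop
      (𝓝 (∫ x in Set.Ioc 0 1, g x)) := by
  have hdom : Tendsto (fun k : ℕ => ∫ x in Set.Ioc (0 : ℝ) 1, c ⌈x * k⌉₊ k) atTop
      (𝓝 (∫ x in Set.Ioc 0 1, g x)) := by
    refine tendsto_integral_filter_of_dominated_convergence (fun _ => C) ?_ ?_
      (integrableOn_const measure_Ioc_lt_top.ne) ((ae_restrict_iff' measurableSet_Ioc).2
        (ae_of_all _ hlim))
    · exact Eventually.of_forall fun k =>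
        (StronglyMeasurable.of_discrete.comp_measurable (f := fun b => c b k)
          (Nat.measurable_ceil.comp (measurable_id.mul_const (k : ℝ)))).aestronglyMeasurable
    · filter_upwards [eventually_gt_atTop 0] with k hk
      exact (ae_restrict_iff' measurableSet_Ioc).2
        (ae_of_all _ fun x hx => hbound k _ (natCeil_mul_mem_Icc hk hx))
  refine hdom.congr' ?_
  filter_upwards [eventually_gt_atTop 0] with k hk
  exact integral_Ioc_comp_natCeil_mul (fun b => c b k) hk

end StepFunction

lemma tendsto_add_div_natCeil_mul_add {x : ℝ} (hx : 0 < x) (a c : ℝ) :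
    Tendsto (fun k : ℕ => ((k : ℝ) + a) / (⌈x * k⌉₊ + c)) atTop (𝓝 x⁻¹) := by
  have hr : Tendsto (fun k : ℕ => (⌈x * k⌉₊ : ℝ) / k) atTop (𝓝 x) :=
    (tendsto_nat_ceil_mul_div_atTop hx.le).comp tendsto_natCast_atTop_atTop
  have hinv : Tendsto (fun k : ℕ => (k : ℝ)⁻¹) atTop (𝓝 0) :=
    tendsto_inv_atTop_zero.comp tendsto_natCast_atTop_atTop
  have hlim := ((tendsto_const_nhds (x := (1 : ℝ))).add (hinv.const_mul a)).div
    (hr.add (hinv.const_mul c)) (by simpa using hx.ne')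
  simp only [mul_zero, add_zero, one_div] at hlim
  refine hlim.congr' ?_
  filter_upwards [eventually_ne_atTop 0] with k hk
  have hk' : (k : ℝ) ≠ 0 := Nat.cast_ne_zero.2 hk
  simp only [Pi.div_apply]
  field_simp

lemma tendsto_Htail_natCeil_mul {x : ℝ} (hx : x ∈ Set.Ioc 0 1) :
    Tendsto (fun k : ℕ => Htail ⌈x * k⌉₊ k) atTop (𝓝 (-log x)) := by
  have hlog : ∀ a c : ℝ,
      Tendsto (fun k : ℕ => log (((k : ℝ) + a) / (⌈x * k⌉₊ + c))) atTop (𝓝 (-log x)) :=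
    fun a c => by
      simpa only [log_inv] using
        (tendsto_add_div_natCeil_mul_add hx.1 a c).log (inv_ne_zero hx.1.ne')
  refine tendsto_of_tendsto_of_tendsto_of_le_of_le' (hlog 1 1)
    (by simpa using hlog 0 0) ?_ ?_
  · filter_upwards [eventually_gt_atTop 0] with k hk
    exact_mod_cast log_div_le_Htail (mem_Icc.1 (natCeil_mul_mem_Icc hk hx)).2
  · filter_upwards [eventually_gt_atTop 0] with k hk
    obtain ⟨hb, hbk⟩ := mem_Icc.1 (natCeil_mul_mem_Icc hk hx)
    exact Htail_le_log_div hb hbk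

noncomputable def biasCoeff (p t h : ℝ) : ℝ := (1 / p) * (t ^ p / (1 - p) - 1) / (1 + h)

lemma cCoeff_eq_biasCoeff (b k : ℕ) (p : ℝ) :
    cCoeff b k p = biasCoeff p ((k + 1) / b) (Htail b k) := rfl

lemma abs_biasCoeff_le {p t h : ℝ} (hp : p < 0) (ht : 1 ≤ t) (hh : 0 ≤ h) :
    |biasCoeff p t h| ≤ -1 / p := by
  have hq : 0 ≤ t ^ p / (1 - p) ∧ t ^ p / (1 - p) ≤ 1 :=
    ⟨div_nonneg (rpow_nonneg (by linarith) _) (by linarith),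
      div_le_one_of_le₀ (by linarith [rpow_le_one_of_one_le_of_nonpos ht hp.le]) (by linarith)⟩
  have hc : 0 ≤ -1 / p := div_nonneg_of_nonpos (by norm_num) hp.le
  have hform : biasCoeff p t h = -1 / p * (1 - t ^ p / (1 - p)) / (1 + h) := by
    unfold biasCoeff; ring
  have hnum : 0 ≤ -1 / p * (1 - t ^ p / (1 - p)) := mul_nonneg hc (by linarith)
  rw [hform, abs_of_nonneg (div_nonneg hnum (by linarith))]
  calc -1 / p * (1 - t ^ p / (1 - p)) / (1 + h) ≤ -1 / p * (1 - t ^ p / (1 - p)) :=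
        div_le_self hnum (by linarith)
    _ ≤ -1 / p := mul_le_of_le_one_right hc (by linarith)

lemma abs_cCoeff_le {p : ℝ} (hp : p < 0) {b k : ℕ} (hb : 1 ≤ b) (hbk : b ≤ k) :
    |cCoeff b k p| ≤ -1 / p :=
  abs_biasCoeff_le hp ((one_le_div₀ (Nat.cast_pos.2 hb)).2 (by norm_cast; omega))
    (Htail_nonneg b k)

lemma Filter.Tendsto.biasCoeff {α : Type*} {l : Filter α} {t h : α → ℝ} {t₀ h₀ : ℝ} (p : ℝ)
    (ht : Tendsto t l (𝓝 t₀)) (hh : Tendsto h l (𝓝 h₀)) (ht₀ : t₀ ≠ 0) (hh₀ : 1 + h₀ ≠ 0) :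
    Tendsto (fun a => biasCoeff p (t a) (h a)) l (𝓝 (biasCoeff p t₀ h₀)) :=
  ((((ht.rpow_const (Or.inl ht₀)).div_const _).sub_const 1).const_mul _).div
    (hh.const_add 1) hh₀

lemma tendsto_cCoeff_natCeil_mul (p : ℝ) {x : ℝ} (hx : x ∈ Set.Ioc 0 1) :
    Tendsto (fun k : ℕ => cCoeff ⌈x * k⌉₊ k p) atTop (𝓝 (biasCoeff p x⁻¹ (-log x))) := by
  simp only [cCoeff_eq_biasCoeff]
  refine Tendsto.biasCoeff p (by simpa using tendsto_add_div_natCeil_mul_add hx.1 1 0)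
    (tendsto_Htail_natCeil_mul hx) (inv_ne_zero hx.1.ne') ?_
  linarith [log_nonpos hx.1.le hx.2]

lemma integral_Ioc_zero_one_eq_integral_Ioi_one {E : Type*} [NormedAddCommGroup E]
    [NormedSpace ℝ E] (g : ℝ → E) :
    ∫ x in Set.Ioc 0 1, g x = ∫ v in Set.Ioi 1, exp (1 - v) • g (exp (1 - v)) := by
  have himage : (fun v => exp (1 - v)) '' Set.Ioi 1 = Set.Ioo 0 1 := by
    rw [show (fun v => exp (1 - v)) = exp ∘ (fun v => 1 - v) from rfl, Set.image_comp,
      Set.image_const_sub_Ioi, sub_self, image_exp_Iio, exp_zero]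
  have hderiv : ∀ v ∈ Set.Ioi (1 : ℝ),
      HasDerivWithinAt (fun v => exp (1 - v)) (-exp (1 - v)) (Set.Ioi 1) v := fun v _ => by
    simpa using ((hasDerivAt_id v).const_sub 1).exp.hasDerivWithinAt
  rw [integral_Ioc_eq_integral_Ioo, ← himage, integral_image_eq_integral_abs_deriv_smul
    measurableSet_Ioi hderiv (exp_injective.comp sub_right_injective).injOn]
  simp only [abs_neg, abs_of_pos (exp_pos _)]

lemma integrableOn_exp_neg_mul_div_Ioi_one {c : ℝ} (hc : 0 < c) :
    IntegrableOn (fun v => exp (-(c * v)) / v) (Set.Ioi 1) := by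
  refine (exp_neg_integrableOn_Ioi 1 hc).mono' ?_ ((ae_restrict_iff' measurableSet_Ioi).2
    (ae_of_all _ fun v (hv : 1 < v) => ?_))
  · exact ((continuous_exp.comp (continuous_const.mul continuous_id).neg).measurable.div
      measurable_id).aestronglyMeasurable
  · rw [norm_div, norm_of_nonneg (exp_pos _).le, norm_of_nonneg (by linarith), neg_mul]
    exact div_le_self (exp_pos _).le hv.le

lemma integral_exp_neg_mul_div_Ioi_one {c : ℝ} (hc : 0 < c) :
    ∫ v in Set.Ioi 1, exp (-(c * v)) / v = Ei c := by
  have hscale : (fun v : ℝ => exp (-(c * v)) / v) = fun v => c * (exp (-(c * v)) / (c * v)) := by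
    funext v
    rw [mul_div_assoc', mul_div_mul_left _ _ hc.ne']
  rw [hscale, integral_const_mul, integral_comp_mul_left_Ioi (fun w => exp (-w) / w) 1 hc,
    mul_one, smul_eq_mul, ← mul_assoc, mul_inv_cancel₀ hc.ne', one_mul, Ei]

-- The second term is written with `1 * v` to match `integral_exp_neg_mul_div_Ioi_one` at `c = 1`.
lemma exp_one_sub_mul_biasCoeff {p : ℝ} (hp : p ≠ 0) (hp1 : 1 - p ≠ 0) {v : ℝ} (hv : v ≠ 0) :
    exp (1 - v) * biasCoeff p (exp (1 - v))⁻¹ (-log (exp (1 - v))) =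
      exp (1 - p) / (p * (1 - p)) * (exp (-((1 - p) * v)) / v) -
        exp 1 / p * (exp (-(1 * v)) / v) := by
  have hpow : (exp (1 - v))⁻¹ ^ p = exp (1 - p) * exp (-((1 - p) * v)) / exp (1 - v) := by
    rw [eq_div_iff (exp_pos _).ne', ← exp_neg, ← exp_mul, ← exp_add, ← exp_add]
    ring_nf
  have hsplit : exp (-(1 * v)) = exp (1 - v) / exp 1 := by
    rw [eq_div_iff (exp_pos _).ne', ← exp_add]
    ring_nf
  have hden : 1 + -log (exp (1 - v)) = v := by
    rw [log_exp]
    ring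
  unfold biasCoeff
  rw [hden, hpow, hsplit]
  field_simp

lemma integral_biasCoeff {p : ℝ} (hp : p < 0) :
    ∫ x in Set.Ioc 0 1, biasCoeff p x⁻¹ (-log x) =
      exp (1 - p) * Ei (1 - p) / (p * (1 - p)) - exp 1 / p * Ei 1 := by
  have h1p : 0 < 1 - p := by linarith
  rw [integral_Ioc_zero_one_eq_integral_Ioi_one]
  simp only [smul_eq_mul]
  rw [setIntegral_congr_fun measurableSet_Ioi
    fun (v : ℝ) (hv : 1 < v) => exp_one_sub_mul_biasCoeff hp.ne h1p.ne' (by linarith : v ≠ 0),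
    integral_sub ((integrableOn_exp_neg_mul_div_Ioi_one h1p).const_mul _)
      ((integrableOn_exp_neg_mul_div_Ioi_one one_pos).const_mul _),
    integral_const_mul, integral_const_mul, integral_exp_neg_mul_div_Ioi_one h1p,
    integral_exp_neg_mul_div_Ioi_one one_pos]
  ring

/-- For `p < 0`,
`lim_{k→∞} (1/k)·∑_{b=1}^{k} c_{b,k,p} = e^{1−p}·Ei(1−p)/(p(1−p)) − (e/p)·Ei(1)`. -/
theorem limit_average_bias_coefficient (p : ℝ) (hp : p < 0) :
    Filter.Tendsto
      (fun k : ℕ => (1 / (k : ℝ)) * ∑ b ∈ Finset.Icc 1 k, cCoeff b k p)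
      Filter.atTop
      (nhds (Real.exp (1 - p) * Ei (1 - p) / (p * (1 - p)) - Real.exp 1 / p * Ei 1)) := by
  rw [← integral_biasCoeff hp]
  exact tendsto_average_of_tendsto_natCeil_mul
    (fun k b hb => abs_cCoeff_le hp (mem_Icc.1 hb).1 (mem_Icc.1 hb).2)
    fun x hx => tendsto_cCoeff_natCeil_mul p hx
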